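/- Let (A, BWP) be a finite system of best-worst choice probabilities with |A| = 4. Suppose w : Π_A → ℝ is a function such that for every C ⊆ A with |C| ≤ 2, all distinct a, b ∈ A\C, and every ranking ρ ∈ S*(a, C, b), one has w(ρ) = K_{ab,C} / ((|C|+1)! · (2−|C|)!). Then for every B ⊆ A with |B| ≤ 2 and all distinct a, b ∈ A\B, Σ_{ρ ∈ S(a, A\B, b)} w(ρ) = BW_{A\B}(a,b). -/

import Mathlib

open Finset MeasureTheory

variable {α : Type*}

/-- A finite system of best-worst choice probabilities on the ground set `A = univ`:
each `BW B a b` is in `[0,1]` and the best-worst probabilities over each feasible set sum to 1. -/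
def IsBWSystem [Fintype α] [DecidableEq α] (BW : Finset α → α → α → ℝ) : Prop :=
  (∀ B : Finset α, 2 ≤ B.card → ∀ a ∈ B, ∀ b ∈ B, a ≠ b → BW B a b ∈ Set.Icc (0:ℝ) 1) ∧
  ∀ B : Finset α, 2 ≤ B.card → ∑ a ∈ B, ∑ b ∈ B.erase a, BW B a b = 1

/-- The best-worst Block–Marschak polynomial `K_{ab,B} = ∑_{C ⊆ B} (-1)^{|B|-|C|} BW_{A∖C}(a,b)`. -/
def BMK [Fintype α] [DecidableEq α] (BW : Finset α → α → α → ℝ) (a b : α) (B : Finset α) : ℝ :=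
  ∑ C ∈ B.powerset, (-1 : ℝ) ^ (B.card - C.card) * BW Cᶜ a b

/-- A ranking of (all of) `α`: a linear order, encoded as a bijection to `Fin |α|`.
Larger values mean "ranked higher". -/
abbrev Ranking (α : Type*) [Fintype α] := α ≃ Fin (Fintype.card α)

/-- `Sbw D a b` : the set of rankings in which `a` is the maximum and `b` is the minimum of `D`. -/
def Sbw [Fintype α] [DecidableEq α] (D : Finset α) (a b : α) : Finset (Ranking α) :=
  univ.filter fun ρ => (∀ c ∈ D, ρ c ≤ ρ a) ∧ (∀ c ∈ D, ρ b ≤ ρ c)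

/-- `SStar B a b` : the set of rankings in which `a` is the maximum and `b` is the minimum of
`Bᶜ = A∖B` and, in addition, every element of `B` is either above `a` or below `b`. -/
def SStar [Fintype α] [DecidableEq α] (B : Finset α) (a b : α) : Finset (Ranking α) :=
  univ.filter fun ρ =>
    (∀ c ∈ Bᶜ, ρ c ≤ ρ a) ∧ (∀ c ∈ Bᶜ, ρ b ≤ ρ c) ∧ ∀ c ∈ B, ρ a < ρ c ∨ ρ c < ρ b

/-! The rankings in `S(a, A∖B, b)` split according to which elements of `B` they place above `a`
or below `b`; the part where this set is `C ⊆ B` is exactly `S*(a, C, b)`. The hypothesis makes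
`w` constant on `S*(a, C, b)`, and a count of that set shows its total weight is `K_{ab,C}`.
Summing over `C ⊆ B` and applying Möbius inversion on the Boolean lattice of subsets of `B`
recovers `BW_{A∖B}(a,b)`. -/

namespace Finset

variable {R : Type*} [CommRing R] [DecidableEq α]

theorem sum_Icc_neg_one_pow_card_sub {D B : Finset α} (hDB : D ⊆ B) :
    ∑ C ∈ Icc D B, (-1 : R) ^ (#C - #D) = if D = B then 1 else 0 := by
  have hdisj : ∀ E ∈ (B \ D).powerset, Disjoint D E := fun E hE =>
    disjoint_sdiff.mono_right (mem_powerset.1 hE)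
  rw [Icc_eq_image_powerset hDB, sum_image fun E hE E' hE' h => by
    rw [← union_sdiff_cancel_left (hdisj E hE), h, union_sdiff_cancel_left (hdisj E' hE')]]
  have hcard : ∀ E ∈ (B \ D).powerset, #(D ∪ E) - #D = #E := fun E hE => by
    rw [card_union_of_disjoint (hdisj E hE), Nat.add_sub_cancel_left]
  rw [sum_congr rfl fun E hE => by rw [hcard E hE]]
  have hpow := congrArg (Int.cast : ℤ → R) (sum_powerset_neg_one_pow_card (x := B \ D))
  push_cast at hpow
  rw [hpow]
  exact if_congr (sdiff_eq_empty_iff_subset.trans ⟨hDB.antisymm, fun h => h.symm.subset⟩) rfl rfl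

theorem sum_powerset_sum_powerset_neg_one_pow_mul (f : Finset α → R) (B : Finset α) :
    ∑ C ∈ B.powerset, ∑ D ∈ C.powerset, (-1 : R) ^ (#C - #D) * f D = f B := by
  rw [sum_comm' (t' := B.powerset) (s' := fun D => Icc D B) fun C D => by
    simp only [mem_powerset, mem_Icc]
    exact ⟨fun ⟨hCB, hDC⟩ => ⟨⟨hDC, hCB⟩, hDC.trans hCB⟩, fun ⟨⟨hDC, hCB⟩, _⟩ => ⟨hCB, hDC⟩⟩]
  simp_rw [← sum_mul]
  rw [sum_congr rfl fun D hD => by rw [sum_Icc_neg_one_pow_card_sub (mem_powerset.1 hD)]]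
  simp

end Finset

section Rankings

variable [Fintype α] [DecidableEq α]

def rankedOutside (B : Finset α) (a b : α) (ρ : Ranking α) : Finset α :=
  B.filter fun c => ρ a < ρ c ∨ ρ c < ρ b

theorem filter_rankedOutside_eq_SStar {B C : Finset α} (hCB : C ⊆ B) (a b : α) :
    (Sbw Bᶜ a b).filter (fun ρ => rankedOutside B a b ρ = C) = SStar C a b := by
  ext ρ
  simp only [Sbw, SStar, rankedOutside, mem_filter, mem_univ, true_and, mem_compl,
    Finset.ext_iff]
  grind

theorem sum_Sbw_compl_eq_sum_powerset_sum_SStar {M : Type*} [AddCommMonoid M]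
    (f : Ranking α → M) (B : Finset α) (a b : α) :
    ∑ ρ ∈ Sbw Bᶜ a b, f ρ = ∑ C ∈ B.powerset, ∑ ρ ∈ SStar C a b, f ρ := by
  rw [← sum_fiberwise_of_maps_to (g := rankedOutside B a b) (t := B.powerset)
    fun ρ _ => mem_powerset.2 (filter_subset _ _)]
  exact sum_congr rfl fun C hC => by rw [filter_rankedOutside_eq_SStar (mem_powerset.1 hC)]

theorem card_SStar_map {β : Type*} [Fintype β] [DecidableEq β] (e : α ≃ β) (C : Finset α)
    (a b : α) : #(SStar (C.map e.toEmbedding) (e a) (e b)) = #(SStar C a b) := by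
  have hcard : Fintype.card α = Fintype.card β := Fintype.card_congr e
  refine (card_equiv (e.equivCongr (finCongr hcard)) fun ρ => ?_).symm
  simp [SStar, e.forall_congr_right.symm]

/- A ranking in `S*(a, C, b)` orders `C` together with the contiguous block `A∖C` freely, and
the `2 - |C|` inner elements of that block freely. -/
theorem card_SStar_fin_four : ∀ C : Finset (Fin 4), #C ≤ 2 → ∀ a ∈ Cᶜ, ∀ b ∈ Cᶜ, a ≠ b →
    #(SStar C a b) = (#C + 1).factorial * (2 - #C).factorial := by
  decide

theorem card_SStar_of_card_eq_four (h4 : Fintype.card α = 4) {C : Finset α} (hC : #C ≤ 2)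
    {a b : α} (ha : a ∈ Cᶜ) (hb : b ∈ Cᶜ) (hab : a ≠ b) :
    #(SStar C a b) = (#C + 1).factorial * (2 - #C).factorial := by
  let e := Fintype.equivFinOfCardEq h4
  rw [← card_SStar_map e, ← card_map (s := C) e.toEmbedding]
  exact card_SStar_fin_four _ (by rwa [card_map]) _ (by simpa using ha) _ (by simpa using hb)
    (e.injective.ne hab)

end Rankings

theorem sum_weights_on_Sbw_eq_BW_general [Fintype α] [DecidableEq α]
    (BW : Finset α → α → α → ℝ) (h4 : Fintype.card α = 4)
    (w : Ranking α → ℝ)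
    (hw : ∀ C : Finset α, C.card ≤ 2 → ∀ a ∈ Cᶜ, ∀ b ∈ Cᶜ, a ≠ b →
      ∀ ρ ∈ SStar C a b,
        w ρ = BMK BW a b C / ((C.card + 1).factorial * (2 - C.card).factorial : ℝ)) :
    ∀ B : Finset α, B.card ≤ 2 → ∀ a ∈ Bᶜ, ∀ b ∈ Bᶜ, a ≠ b →
      ∑ ρ ∈ Sbw Bᶜ a b, w ρ = BW Bᶜ a b := by
  intro B hB a ha b hb hab
  have hSStar : ∀ C ∈ B.powerset, ∑ ρ ∈ SStar C a b, w ρ = BMK BW a b C := by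
    intro C hC
    have hCB := mem_powerset.1 hC
    have hCcard : #C ≤ 2 := (card_le_card hCB).trans hB
    have hcompl : Bᶜ ⊆ Cᶜ := compl_subset_compl.2 hCB
    rw [sum_congr rfl (hw C hCcard a (hcompl ha) b (hcompl hb) hab), sum_const,
      card_SStar_of_card_eq_four h4 hCcard (hcompl ha) (hcompl hb) hab, nsmul_eq_mul]
    push_cast
    field_simp
  rw [sum_Sbw_compl_eq_sum_powerset_sum_SStar, sum_congr rfl hSStar]
  exact sum_powerset_sum_powerset_neg_one_pow_mul (fun D => BW Dᶜ a b) B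

/-- For `|A| = 4`: if `w : Π_A → ℝ` takes the value `K_{ab,C} / ((|C|+1)! (2−|C|)!)` on every
ranking in `S*(a, C, b)` (for all `C ⊆ A` with `|C| ≤ 2` and distinct `a, b ∈ A∖C`), then for
every `B ⊆ A` with `|B| ≤ 2` and distinct `a, b ∈ A∖B`, the total weight of `S(a, A∖B, b)`
is `BW_{A∖B}(a,b)`. -/
theorem sum_weights_on_Sbw_eq_BW [Fintype α] [DecidableEq α]
    (BW : Finset α → α → α → ℝ) (h4 : Fintype.card α = 4) (hsys : IsBWSystem BW)
    (w : Ranking α → ℝ)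
    (hw : ∀ C : Finset α, C.card ≤ 2 → ∀ a ∈ Cᶜ, ∀ b ∈ Cᶜ, a ≠ b →
      ∀ ρ ∈ SStar C a b,
        w ρ = BMK BW a b C / ((C.card + 1).factorial * (2 - C.card).factorial : ℝ)) :
    ∀ B : Finset α, B.card ≤ 2 → ∀ a ∈ Bᶜ, ∀ b ∈ Bᶜ, a ≠ b →
      ∑ ρ ∈ Sbw Bᶜ a b, w ρ = BW Bᶜ a b :=
  sum_weights_on_Sbw_eq_BW_general BW h4 w hw
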